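/- arXiv:1811.09007 — 2 statements merged into one kernel-verified Lean document; each statement's English description precedes it below -/
import Mathlib

section
/- Let 0 < α < 1, 0 < β < 1, γ > 0, δ > 0 with γ ≠ δ. Then there exists a constant C depending on α, β, γ, δ such that for all t > 0, ∫₀ᵗ (1 + (t−s)^{−α}) e^{−γ(t−s)} (1 + s^{−β}) e^{−δ s} ds ≤ C (1 + t^{min{0, 1−α−β}}) e^{−min{γ,δ} t}. -/
open Real MeasureTheory Set

lemma Jint (b ε T : ℝ) (hb : b < 1) :
    IntervalIntegrable (fun s : ℝ => (1 + s ^ (-b)) * Real.exp (-ε * s)) volume 0 T :=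
  (intervalIntegrable_const.add (intervalIntegral.intervalIntegrable_rpow' (by linarith))).mul_continuousOn
    (Continuous.continuousOn (by continuity))

lemma intOnIoi (b ε : ℝ) (hb0 : 0 < b) (hb1 : b < 1) (hε : 0 < ε) :
    IntegrableOn (fun s : ℝ => (1 + s ^ (-b)) * Real.exp (-ε * s)) (Set.Ioi (0:ℝ)) := by
  have hmeas : Measurable fun s : ℝ => (1 + s ^ (-b)) * Real.exp (-ε * s) := by fun_prop
  rw [← Set.Ioc_union_Ioi_eq_Ioi (zero_le_one (α := ℝ))]
  apply MeasureTheory.IntegrableOn.union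
  · have hg : IntegrableOn (fun s : ℝ => 1 + s ^ (-b)) (Set.Ioc (0:ℝ) 1) :=
      ((intervalIntegrable_const (c := (1:ℝ)) (μ := volume) (a := 0) (b := 1)).add
        (intervalIntegral.intervalIntegrable_rpow' (r := -b) (by linarith) (a := 0) (b := 1))).1
    refine hg.mono' hmeas.aestronglyMeasurable ?_
    refine (ae_restrict_iff' measurableSet_Ioc).2 (ae_of_all _ fun s hs => ?_)
    have h0 : (0:ℝ) ≤ s ^ (-b) := Real.rpow_nonneg hs.1.le _
    have h1 : (0:ℝ) ≤ 1 + s ^ (-b) := by linarith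
    rw [Real.norm_eq_abs, abs_of_nonneg (mul_nonneg h1 (exp_nonneg _))]
    calc (1 + s ^ (-b)) * Real.exp (-ε * s) ≤ (1 + s ^ (-b)) * 1 := by
          apply mul_le_mul_of_nonneg_left _ h1
          exact Real.exp_le_one_iff.2 (by nlinarith [hs.1.le])
      _ = 1 + s ^ (-b) := mul_one _
  · have hg : IntegrableOn (fun s : ℝ => 2 * Real.exp (-ε * s)) (Set.Ioi (1:ℝ)) :=
      (exp_neg_integrableOn_Ioi 1 hε).const_mul 2
    refine hg.mono' hmeas.aestronglyMeasurable ?_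
    refine (ae_restrict_iff' measurableSet_Ioi).2 (ae_of_all _ fun s hs => ?_)
    have hs1 : (1:ℝ) ≤ s := (Set.mem_Ioi.1 hs).le
    have h0 : (0:ℝ) ≤ s ^ (-b) := Real.rpow_nonneg (by linarith) _
    have h2 : s ^ (-b) ≤ 1 := Real.rpow_le_one_of_one_le_of_nonpos hs1 (by linarith)
    rw [Real.norm_eq_abs, abs_of_nonneg (mul_nonneg (by linarith) (exp_nonneg _))]
    have := exp_nonneg (-ε * s)
    nlinarith

lemma J_le_A (b ε T : ℝ) (hb0 : 0 < b) (hb1 : b < 1) (hε : 0 < ε) (hT : 0 < T) :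
    (∫ s in (0:ℝ)..T, (1 + s ^ (-b)) * Real.exp (-ε * s))
      ≤ ∫ s in Set.Ioi (0:ℝ), (1 + s ^ (-b)) * Real.exp (-ε * s) := by
  rw [intervalIntegral.integral_of_le hT.le]
  refine setIntegral_mono_set (intOnIoi b ε hb0 hb1 hε) ?_ (HasSubset.Subset.eventuallyLE Set.Ioc_subset_Ioi_self)
  refine (ae_restrict_iff' measurableSet_Ioi).2 (ae_of_all _ fun s hs => ?_)
  have h0 : (0:ℝ) ≤ s ^ (-b) := Real.rpow_nonneg (Set.mem_Ioi.1 hs).le _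
  have h1 := exp_nonneg (-ε * s)
  show (0:ℝ) ≤ _
  exact mul_nonneg (by linarith) h1

lemma J_le_small (b ε T : ℝ) (hb0 : 0 < b) (hb1 : b < 1) (hε : 0 ≤ ε) (hT : 0 ≤ T) :
    (∫ s in (0:ℝ)..T, (1 + s ^ (-b)) * Real.exp (-ε * s)) ≤ T + T ^ (1-b) / (1-b) := by
  have hint : IntervalIntegrable (fun s : ℝ => 1 + s ^ (-b)) volume 0 T :=
    intervalIntegrable_const.add (intervalIntegral.intervalIntegrable_rpow' (by linarith))
  have h1 : (∫ s in (0:ℝ)..T, (1 + s ^ (-b)) * Real.exp (-ε * s))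
      ≤ ∫ s in (0:ℝ)..T, (1 + s ^ (-b)) := by
    refine intervalIntegral.integral_mono_on hT (Jint b ε T hb1) hint fun s hs => ?_
    have h0 : (0:ℝ) ≤ s ^ (-b) := Real.rpow_nonneg hs.1 _
    calc (1 + s ^ (-b)) * Real.exp (-ε * s) ≤ (1 + s ^ (-b)) * 1 := by
          apply mul_le_mul_of_nonneg_left _ (by linarith)
          exact Real.exp_le_one_iff.2 (by nlinarith [hs.1])
      _ = 1 + s ^ (-b) := mul_one _
  have h2 : (∫ s in (0:ℝ)..T, (1 + s ^ (-b))) = T + T ^ (1-b) / (1-b) := by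
    rw [intervalIntegral.integral_add intervalIntegrable_const
      (intervalIntegral.intervalIntegrable_rpow' (by linarith)),
      intervalIntegral.integral_const, integral_rpow (Or.inl (by linarith))]
    rw [Real.zero_rpow (by intro h; linarith [h] : -b + 1 ≠ 0)]
    rw [show -b + 1 = 1 - b by ring]
    simp
  linarith

lemma arith (a b T P : ℝ) (ha0 : 0 < a) (ha1 : a < 1) (hb0 : 0 < b) (hb1 : b < 1)
    (hT : 0 < T) (hT1 : T ≤ 1) (hP : 0 < P) (hPc : T ^ (1-a-b) ≤ 2 + 2*P) :
    (1 + T ^ (-a)) * (T + T ^ (1-b) / (1-b)) ≤ (2 + 3/(1-b)) * (1 + P) := by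
  have e1 : T ^ (-a) * T = T ^ (1-a) := by
    calc T ^ (-a) * T = T ^ (-a) * T ^ (1:ℝ) := by rw [Real.rpow_one]
      _ = T ^ (-a + 1) := (Real.rpow_add hT _ _).symm
      _ = T ^ (1-a) := by rw [show -a + 1 = 1 - a by ring]
  have e2 : T ^ (-a) * T ^ (1-b) = T ^ (1-a-b) := by
    rw [← Real.rpow_add hT, show -a + (1-b) = 1-a-b by ring]
  have hTb : T ^ (1-b) ≤ 1 := Real.rpow_le_one hT.le hT1 (by linarith)
  have hTa : T ^ (1-a) ≤ 1 := Real.rpow_le_one hT.le hT1 (by linarith)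
  have hu : (0:ℝ) < (1-b)⁻¹ := inv_pos.2 (by linarith)
  have expand : (1 + T ^ (-a)) * (T + T ^ (1-b) / (1-b))
      = T + T ^ (1-b) * (1-b)⁻¹ + T ^ (1-a) + T ^ (1-a-b) * (1-b)⁻¹ := by
    rw [div_eq_mul_inv, ← e1, ← e2]; ring
  rw [expand, div_eq_mul_inv]
  nlinarith [mul_nonneg (sub_nonneg.2 hPc) hu.le, mul_nonneg (sub_nonneg.2 hTb) hu.le,
    mul_pos hP hu, Real.rpow_nonneg hT.le (1-a-b), hT1, hP.le]

set_option maxHeartbeats 1000000 in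
/-- Convolution-type estimate with weakly singular kernels and exponential decay. -/
theorem stmt0 (α β γ δ : ℝ) (hα0 : 0 < α) (hα1 : α < 1) (hβ0 : 0 < β) (hβ1 : β < 1)
    (hγ : 0 < γ) (hδ : 0 < δ) (hne : γ ≠ δ) :
    ∃ C > 0, ∀ t : ℝ, 0 < t →
      (∫ s in (0:ℝ)..t,
          (1 + (t - s) ^ (-α)) * Real.exp (-γ * (t - s)) * (1 + s ^ (-β)) * Real.exp (-δ * s))
        ≤ C * (1 + t ^ (min 0 (1 - α - β))) * Real.exp (-(min γ δ) * t) := by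
  set ε := |γ - δ| with hεdef
  have hε : 0 < ε := abs_pos.2 (sub_ne_zero.2 hne)
  set Bα := ∫ s in Set.Ioi (0:ℝ), (1 + s ^ (-α)) * Real.exp (-ε * s) with hBαdef
  set Bβ := ∫ s in Set.Ioi (0:ℝ), (1 + s ^ (-β)) * Real.exp (-ε * s) with hBβdef
  have hBα0 : 0 ≤ Bα := setIntegral_nonneg measurableSet_Ioi fun s hs =>
    mul_nonneg (by have := Real.rpow_nonneg (le_of_lt hs) (-α); linarith) (exp_nonneg _)
  have hBβ0 : 0 ≤ Bβ := setIntegral_nonneg measurableSet_Ioi fun s hs =>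
    mul_nonneg (by have := Real.rpow_nonneg (le_of_lt hs) (-β); linarith) (exp_nonneg _)
  have h1α : (0:ℝ) < 1 - α := by linarith
  have h1β : (0:ℝ) < 1 - β := by linarith
  have hdα : (0:ℝ) < 3 / (1-α) := div_pos (by norm_num) h1α
  have hdβ : (0:ℝ) < 3 / (1-β) := div_pos (by norm_num) h1β
  refine ⟨3*(Bα+Bβ+1) + ((2+3/(1-α)) + (2+3/(1-β))), by linarith, ?_⟩
  intro t ht
  set T := t/2 with hTdef
  have hT : 0 < T := by rw [hTdef]; linarith
  have hTt : T ≤ t := by rw [hTdef]; linarith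
  have htT : t - T = T := by rw [hTdef]; ring
  set m := min γ δ with hm
  set F : ℝ → ℝ := fun s =>
    (1 + (t - s) ^ (-α)) * Real.exp (-γ * (t - s)) * (1 + s ^ (-β)) * Real.exp (-δ * s) with hF
  have hFmeas : Measurable F := by rw [hF]; fun_prop
  -- exponential bounds
  have hexp1 : ∀ s : ℝ, 0 ≤ s → s ≤ T →
      Real.exp (-γ * (t - s)) * Real.exp (-δ * s) ≤ Real.exp (-m * t) * Real.exp (-ε * s) := by
    intro s h0 h1
    have h1' : s ≤ t/2 := by rw [hTdef] at h1; exact h1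
    rw [← Real.exp_add, ← Real.exp_add]
    apply Real.exp_le_exp.2
    rcases le_total γ δ with h | h
    · rw [hm, min_eq_left h, hεdef, abs_of_nonpos (by linarith : γ - δ ≤ 0)]
      nlinarith
    · rw [hm, min_eq_right h, hεdef, abs_of_nonneg (by linarith : 0 ≤ γ - δ)]
      nlinarith [mul_nonneg (by linarith : (0:ℝ) ≤ γ - δ) (by linarith : (0:ℝ) ≤ t - 2*s)]
  have hexp2 : ∀ s : ℝ, T ≤ s → s ≤ t →
      Real.exp (-γ * (t - s)) * Real.exp (-δ * s) ≤ Real.exp (-m * t) * Real.exp (-ε * (t - s)) := by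
    intro s h0 h1
    have h0' : t/2 ≤ s := by rw [hTdef] at h0; exact h0
    rw [← Real.exp_add, ← Real.exp_add]
    apply Real.exp_le_exp.2
    rcases le_total γ δ with h | h
    · rw [hm, min_eq_left h, hεdef, abs_of_nonpos (by linarith : γ - δ ≤ 0)]
      nlinarith [mul_nonneg (by linarith : (0:ℝ) ≤ δ - γ) (by linarith : (0:ℝ) ≤ 2*s - t)]
    · rw [hm, min_eq_right h, hεdef, abs_of_nonneg (by linarith : 0 ≤ γ - δ)]
      nlinarith
  -- pointwise domination on each half
  have hG1 : ∀ s ∈ Set.Icc (0:ℝ) T, F s ≤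
      (Real.exp (-m * t) * (1 + T ^ (-α))) * ((1 + s ^ (-β)) * Real.exp (-ε * s)) := by
    intro s hs
    obtain ⟨h0, h1⟩ := hs
    have hts : T ≤ t - s := by rw [hTdef] at h1 ⊢; linarith
    have hr1 : (t - s) ^ (-α) ≤ T ^ (-α) :=
      Real.rpow_le_rpow_of_nonpos hT hts (by linarith)
    have hn1 : (0:ℝ) ≤ (t - s) ^ (-α) := Real.rpow_nonneg (by linarith) _
    have hn2 : (0:ℝ) ≤ s ^ (-β) := Real.rpow_nonneg h0 _
    have hn3 : (0:ℝ) ≤ 1 + T ^ (-α) := by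
      have := Real.rpow_nonneg hT.le (-α); linarith
    have he := hexp1 s h0 h1
    calc F s = ((1 + (t - s) ^ (-α)) * (1 + s ^ (-β)))
          * (Real.exp (-γ * (t - s)) * Real.exp (-δ * s)) := by rw [hF]; ring
      _ ≤ ((1 + T ^ (-α)) * (1 + s ^ (-β)))
          * (Real.exp (-m * t) * Real.exp (-ε * s)) := by
          apply mul_le_mul (mul_le_mul_of_nonneg_right (by linarith) (by linarith)) he
            (by positivity) (mul_nonneg hn3 (by linarith))
      _ = _ := by ring
  have hG2 : ∀ s ∈ Set.Icc T t, F s ≤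
      (Real.exp (-m * t) * (1 + T ^ (-β))) * ((1 + (t - s) ^ (-α)) * Real.exp (-ε * (t - s))) := by
    intro s hs
    obtain ⟨h0, h1⟩ := hs
    have hr1 : s ^ (-β) ≤ T ^ (-β) :=
      Real.rpow_le_rpow_of_nonpos hT h0 (by linarith)
    have hn1 : (0:ℝ) ≤ (t - s) ^ (-α) := Real.rpow_nonneg (by linarith) _
    have hn2 : (0:ℝ) ≤ s ^ (-β) := Real.rpow_nonneg (by linarith [hT.le]) _
    have hn3 : (0:ℝ) ≤ 1 + T ^ (-β) := by
      have := Real.rpow_nonneg hT.le (-β); linarith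
    have he := hexp2 s h0 h1
    calc F s = ((1 + s ^ (-β)) * (1 + (t - s) ^ (-α)))
          * (Real.exp (-γ * (t - s)) * Real.exp (-δ * s)) := by rw [hF]; ring
      _ ≤ ((1 + T ^ (-β)) * (1 + (t - s) ^ (-α)))
          * (Real.exp (-m * t) * Real.exp (-ε * (t - s))) := by
          apply mul_le_mul (mul_le_mul_of_nonneg_right (by linarith) (by linarith)) he
            (by positivity) (mul_nonneg hn3 (by linarith))
      _ = _ := by ring
  -- integrability
  have hJβ : IntervalIntegrable (fun s : ℝ => (1 + s ^ (-β)) * Real.exp (-ε * s)) volume 0 T :=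
    Jint β ε T hβ1
  have hJα : IntervalIntegrable (fun s : ℝ => (1 + s ^ (-α)) * Real.exp (-ε * s)) volume 0 T :=
    Jint α ε T hα1
  have hG1int : IntervalIntegrable (fun s : ℝ =>
      (Real.exp (-m * t) * (1 + T ^ (-α))) * ((1 + s ^ (-β)) * Real.exp (-ε * s))) volume 0 T :=
    hJβ.const_mul _
  have hG2int : IntervalIntegrable (fun s : ℝ =>
      (Real.exp (-m * t) * (1 + T ^ (-β))) * ((1 + (t - s) ^ (-α)) * Real.exp (-ε * (t - s))))
      volume T t := by
    have h := hJα.comp_sub_left t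
    rw [sub_zero, htT] at h
    exact (h.symm).const_mul _
  have hF1 : IntervalIntegrable F volume 0 T := by
    refine hG1int.mono_fun' hFmeas.aestronglyMeasurable ?_
    rw [Set.uIoc_of_le hT.le]
    filter_upwards [ae_restrict_mem measurableSet_Ioc] with s hs
    have h0 : (0:ℝ) ≤ s := hs.1.le
    have h1 : s ≤ T := hs.2
    have hn1 : (0:ℝ) ≤ (t - s) ^ (-α) := Real.rpow_nonneg (by linarith) _
    have hn2 : (0:ℝ) ≤ s ^ (-β) := Real.rpow_nonneg h0 _
    have hFnn : 0 ≤ F s := by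
      rw [hF]
      exact mul_nonneg (mul_nonneg (mul_nonneg (by linarith) (exp_nonneg _)) (by linarith))
        (exp_nonneg _)
    rw [Real.norm_eq_abs, abs_of_nonneg hFnn]
    exact hG1 s ⟨h0, h1⟩
  have hF2 : IntervalIntegrable F volume T t := by
    refine hG2int.mono_fun' hFmeas.aestronglyMeasurable ?_
    rw [Set.uIoc_of_le hTt]
    filter_upwards [ae_restrict_mem measurableSet_Ioc] with s hs
    have h0 : T ≤ s := hs.1.le
    have h1 : s ≤ t := hs.2
    have hn1 : (0:ℝ) ≤ (t - s) ^ (-α) := Real.rpow_nonneg (by linarith) _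
    have hn2 : (0:ℝ) ≤ s ^ (-β) := Real.rpow_nonneg (by linarith [hT.le]) _
    have hFnn : 0 ≤ F s := by
      rw [hF]
      exact mul_nonneg (mul_nonneg (mul_nonneg (by linarith) (exp_nonneg _)) (by linarith))
        (exp_nonneg _)
    rw [Real.norm_eq_abs, abs_of_nonneg hFnn]
    exact hG2 s ⟨h0, h1⟩
  have hsplit := intervalIntegral.integral_add_adjacent_intervals hF1 hF2
  -- integral bounds on each half
  have hI1 : (∫ s in (0:ℝ)..T, F s) ≤ (Real.exp (-m * t) * (1 + T ^ (-α)))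
      * ∫ s in (0:ℝ)..T, (1 + s ^ (-β)) * Real.exp (-ε * s) := by
    rw [← intervalIntegral.integral_const_mul]
    exact intervalIntegral.integral_mono_on hT.le hF1 hG1int hG1
  have hrefl : (∫ s in T..t, (1 + (t - s) ^ (-α)) * Real.exp (-ε * (t - s)))
      = ∫ s in (0:ℝ)..T, (1 + s ^ (-α)) * Real.exp (-ε * s) := by
    have h := intervalIntegral.integral_comp_sub_left (a := T) (b := t)
      (fun u : ℝ => (1 + u ^ (-α)) * Real.exp (-ε * u)) t
    rw [sub_self, htT] at h
    exact h
  have hI2 : (∫ s in T..t, F s) ≤ (Real.exp (-m * t) * (1 + T ^ (-β)))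
      * ∫ s in (0:ℝ)..T, (1 + s ^ (-α)) * Real.exp (-ε * s) := by
    rw [← hrefl, ← intervalIntegral.integral_const_mul]
    exact intervalIntegral.integral_mono_on hTt hF2 hG2int hG2
  set Jβv := ∫ s in (0:ℝ)..T, (1 + s ^ (-β)) * Real.exp (-ε * s) with hJβv
  set Jαv := ∫ s in (0:ℝ)..T, (1 + s ^ (-α)) * Real.exp (-ε * s) with hJαv
  have hJβnn : 0 ≤ Jβv := intervalIntegral.integral_nonneg hT.le fun s hs =>
    mul_nonneg (by have := Real.rpow_nonneg hs.1 (-β); linarith) (exp_nonneg _)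
  have hJαnn : 0 ≤ Jαv := intervalIntegral.integral_nonneg hT.le fun s hs =>
    mul_nonneg (by have := Real.rpow_nonneg hs.1 (-α); linarith) (exp_nonneg _)
  have hμ : 0 < t ^ (min 0 (1 - α - β)) := Real.rpow_pos_of_pos ht _
  have hE : 0 < Real.exp (-m * t) := Real.exp_pos _
  have hnα : (0:ℝ) ≤ 1 + T ^ (-α) := by have := Real.rpow_nonneg hT.le (-α); linarith
  have hnβ : (0:ℝ) ≤ 1 + T ^ (-β) := by have := Real.rpow_nonneg hT.le (-β); linarith
  rw [← hsplit]
  rcases le_or_gt t 1 with ht1 | ht1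
  · -- small time
    have hT1 : T ≤ 1 := by rw [hTdef]; linarith
    have hJβ_le : Jβv ≤ T + T ^ (1-β) / (1-β) := J_le_small β ε T hβ0 hβ1 hε.le hT.le
    have hJα_le : Jαv ≤ T + T ^ (1-α) / (1-α) := J_le_small α ε T hα0 hα1 hε.le hT.le
    have hPc : T ^ (1-α-β) ≤ 2 + 2 * t ^ (min 0 (1 - α - β)) := by
      rcases le_or_gt (α + β) 1 with hab | hab
      · have h1 : T ^ (1-α-β) ≤ 1 := Real.rpow_le_one hT.le hT1 (by linarith)
        linarith
      · have hμeq : min 0 (1 - α - β) = 1 - α - β := min_eq_right (by linarith)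
        have hsplitT : T ^ (1-α-β) = t ^ (1-α-β) * ((2:ℝ)⁻¹) ^ (1-α-β) := by
          rw [hTdef, div_eq_mul_inv, Real.mul_rpow ht.le (by norm_num)]
        have h2b : ((2:ℝ)⁻¹) ^ (1-α-β) ≤ 2 := by
          rw [Real.inv_rpow (by norm_num : (0:ℝ) ≤ 2)]
          have h1 : (2:ℝ) ^ (-1:ℝ) ≤ (2:ℝ) ^ (1-α-β) :=
            Real.rpow_le_rpow_of_exponent_le one_le_two (by linarith)
          have h2 : (2:ℝ) ^ (-1:ℝ) = 2⁻¹ := by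
            rw [Real.rpow_neg (by norm_num), Real.rpow_one]
          rw [h2] at h1
          calc ((2:ℝ) ^ (1-α-β))⁻¹ ≤ ((2:ℝ)⁻¹)⁻¹ :=
                inv_anti₀ (by norm_num) h1
            _ = 2 := by norm_num
        calc T ^ (1-α-β) = t ^ (1-α-β) * ((2:ℝ)⁻¹) ^ (1-α-β) := hsplitT
          _ ≤ t ^ (1-α-β) * 2 :=
              mul_le_mul_of_nonneg_left h2b (Real.rpow_nonneg ht.le _)
          _ = 2 * t ^ (min 0 (1 - α - β)) := by rw [hμeq]; ring
          _ ≤ 2 + 2 * t ^ (min 0 (1 - α - β)) := by linarith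
    have hPc' : T ^ (1-β-α) ≤ 2 + 2 * t ^ (min 0 (1 - α - β)) := by
      rw [show (1:ℝ) - β - α = 1 - α - β by ring]; exact hPc
    have hK1 : (1 + T ^ (-α)) * (T + T ^ (1-β) / (1-β))
        ≤ (2 + 3/(1-β)) * (1 + t ^ (min 0 (1 - α - β))) :=
      arith α β T _ hα0 hα1 hβ0 hβ1 hT hT1 hμ hPc
    have hK2 : (1 + T ^ (-β)) * (T + T ^ (1-α) / (1-α))
        ≤ (2 + 3/(1-α)) * (1 + t ^ (min 0 (1 - α - β))) :=
      arith β α T _ hβ0 hβ1 hα0 hα1 hT hT1 hμ hPc'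
    have hb1 : (1 + T ^ (-α)) * Jβv ≤ (2 + 3/(1-β)) * (1 + t ^ (min 0 (1 - α - β))) :=
      le_trans (mul_le_mul_of_nonneg_left hJβ_le hnα) hK1
    have hb2 : (1 + T ^ (-β)) * Jαv ≤ (2 + 3/(1-α)) * (1 + t ^ (min 0 (1 - α - β))) :=
      le_trans (mul_le_mul_of_nonneg_left hJα_le hnβ) hK2
    calc (∫ s in (0:ℝ)..T, F s) + ∫ s in T..t, F s
        ≤ (Real.exp (-m * t) * (1 + T ^ (-α))) * Jβv
          + (Real.exp (-m * t) * (1 + T ^ (-β))) * Jαv := add_le_add hI1 hI2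
      _ = Real.exp (-m * t) * ((1 + T ^ (-α)) * Jβv)
          + Real.exp (-m * t) * ((1 + T ^ (-β)) * Jαv) := by ring
      _ ≤ Real.exp (-m * t) * ((2 + 3/(1-β)) * (1 + t ^ (min 0 (1 - α - β))))
          + Real.exp (-m * t) * ((2 + 3/(1-α)) * (1 + t ^ (min 0 (1 - α - β)))) :=
          add_le_add (mul_le_mul_of_nonneg_left hb1 hE.le) (mul_le_mul_of_nonneg_left hb2 hE.le)
      _ = (((2 + 3/(1-α)) + (2 + 3/(1-β))) * (1 + t ^ (min 0 (1 - α - β))))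
          * Real.exp (-m * t) := by ring
      _ ≤ ((3*(Bα+Bβ+1) + ((2+3/(1-α)) + (2+3/(1-β)))) * (1 + t ^ (min 0 (1 - α - β))))
          * Real.exp (-m * t) := by
          apply mul_le_mul_of_nonneg_right _ hE.le
          apply mul_le_mul_of_nonneg_right _ (by linarith)
          linarith
      _ = (3*(Bα+Bβ+1) + ((2+3/(1-α)) + (2+3/(1-β)))) * (1 + t ^ (min 0 (1 - α - β)))
          * Real.exp (-m * t) := by ring
  · -- large time
    have hT2 : (2:ℝ)⁻¹ ≤ T := by rw [hTdef]; linarith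
    have h2le : ∀ c : ℝ, 0 < c → c < 1 → T ^ (-c) ≤ 2 := by
      intro c hc0 hc1
      calc T ^ (-c) ≤ ((2:ℝ)⁻¹) ^ (-c) :=
            Real.rpow_le_rpow_of_nonpos (by norm_num) hT2 (by linarith)
        _ = ((2:ℝ) ^ (-c))⁻¹ := Real.inv_rpow (by norm_num) _
        _ = (2:ℝ) ^ c := by rw [Real.rpow_neg (by norm_num), inv_inv]
        _ ≤ (2:ℝ) ^ (1:ℝ) := Real.rpow_le_rpow_of_exponent_le one_le_two (by linarith)
        _ = 2 := Real.rpow_one 2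
    have hTα2 : T ^ (-α) ≤ 2 := h2le α hα0 hα1
    have hTβ2 : T ^ (-β) ≤ 2 := h2le β hβ0 hβ1
    have hJβA : Jβv ≤ Bβ := J_le_A β ε T hβ0 hβ1 hε hT
    have hJαA : Jαv ≤ Bα := J_le_A α ε T hα0 hα1 hε hT
    have hb1 : (1 + T ^ (-α)) * Jβv ≤ 3 * Bβ :=
      mul_le_mul (by linarith) hJβA hJβnn (by norm_num)
    have hb2 : (1 + T ^ (-β)) * Jαv ≤ 3 * Bα :=
      mul_le_mul (by linarith) hJαA hJαnn (by norm_num)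
    calc (∫ s in (0:ℝ)..T, F s) + ∫ s in T..t, F s
        ≤ (Real.exp (-m * t) * (1 + T ^ (-α))) * Jβv
          + (Real.exp (-m * t) * (1 + T ^ (-β))) * Jαv := add_le_add hI1 hI2
      _ = Real.exp (-m * t) * ((1 + T ^ (-α)) * Jβv)
          + Real.exp (-m * t) * ((1 + T ^ (-β)) * Jαv) := by ring
      _ ≤ Real.exp (-m * t) * (3 * Bβ) + Real.exp (-m * t) * (3 * Bα) :=
          add_le_add (mul_le_mul_of_nonneg_left hb1 hE.le) (mul_le_mul_of_nonneg_left hb2 hE.le)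
      _ = (3 * Bα + 3 * Bβ) * Real.exp (-m * t) := by ring
      _ ≤ ((3*(Bα+Bβ+1) + ((2+3/(1-α)) + (2+3/(1-β)))) * (1 + t ^ (min 0 (1 - α - β))))
          * Real.exp (-m * t) := by
          apply mul_le_mul_of_nonneg_right _ hE.le
          have hc : 3 * Bα + 3 * Bβ ≤ 3*(Bα+Bβ+1) + ((2+3/(1-α)) + (2+3/(1-β))) := by linarith
          have hc0 : (0:ℝ) ≤ 3*(Bα+Bβ+1) + ((2+3/(1-α)) + (2+3/(1-β))) := by linarith
          have h1μ : (1:ℝ) ≤ 1 + t ^ (min 0 (1 - α - β)) := by linarith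
          calc 3 * Bα + 3 * Bβ ≤ 3*(Bα+Bβ+1) + ((2+3/(1-α)) + (2+3/(1-β))) := hc
            _ ≤ (3*(Bα+Bβ+1) + ((2+3/(1-α)) + (2+3/(1-β)))) * (1 + t ^ (min 0 (1 - α - β))) :=
                le_mul_of_one_le_right hc0 h1μ
      _ = (3*(Bα+Bβ+1) + ((2+3/(1-α)) + (2+3/(1-β)))) * (1 + t ^ (min 0 (1 - α - β)))
          * Real.exp (-m * t) := by ring
end

section
/- Suppose κ, μ, λ' > 0 with λ' < μ, and let f : (0,∞) → ℝ≥0 satisfy f(t) ≤ κ ∫₀ᵗ e^{−μ(t−s)} (1 + (t−s)^{−1/2−a}) e^{−2λ's} (1 + s^{−3/2+b}) ds for all t > 0, where 0 < 1/2 + a < 1 and 0 < 3/2 − b < 1. Then there exists C > 0 depending on κ, μ, λ', a, b such that f(t) ≤ C e^{−λ' t} (1 + t^{−1+c}) for all t > 0, where c = b − a (assuming 0 < 1 − c < 1). -/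
open MeasureTheory

open intervalIntegral Set



lemma aux_exp_int {ε t : ℝ} (hε : 0 < ε) :
    ∫ s in (0:ℝ)..t, Real.exp (-ε * s) ≤ 1 / ε := by
  have h := integral_comp_mul_left (a := (0:ℝ)) (b := t) Real.exp
    (c := -ε) (neg_ne_zero.mpr hε.ne')
  rw [h, integral_exp, smul_eq_mul]
  have h1 : Real.exp (-ε * 0) = 1 := by norm_num
  have h2 : 0 < Real.exp (-ε * t) := Real.exp_pos _
  rw [h1, inv_neg, one_div]
  have hi : 0 < ε⁻¹ := inv_pos.mpr hε
  nlinarith [mul_pos hi h2]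

lemma aux_exp_rpow {ε γ t : ℝ} (hε : 0 < ε) (hγ0 : 0 < γ) (hγ1 : γ < 1) (ht : 0 ≤ t) :
    ∫ s in (0:ℝ)..t, Real.exp (-ε * s) * s ^ (-γ) ≤ 1 / (1 - γ) + 1 / ε := by
  have hεi : (0:ℝ) ≤ 1 / ε := by positivity
  have hγi : (0:ℝ) ≤ 1 / (1 - γ) := by
    apply div_nonneg zero_le_one; linarith
  have hint : ∀ u v : ℝ, IntervalIntegrable (fun s : ℝ => Real.exp (-ε * s) * s ^ (-γ))
      volume u v := fun u v =>
    (intervalIntegrable_rpow' (by linarith)).continuousOn_mul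
      (Continuous.continuousOn (by fun_prop))
  have key : ∀ r : ℝ, 0 ≤ r → r ≤ 1 →
      ∫ s in (0:ℝ)..r, Real.exp (-ε * s) * s ^ (-γ) ≤ 1 / (1 - γ) := by
    intro r hr0 hr1
    have h1 : ∫ s in (0:ℝ)..r, Real.exp (-ε * s) * s ^ (-γ) ≤
        ∫ s in (0:ℝ)..r, s ^ (-γ) := by
      apply integral_mono_on hr0 (hint 0 r) (intervalIntegrable_rpow' (by linarith))
      intro x hx
      have hx0 : 0 ≤ x ^ (-γ) := Real.rpow_nonneg hx.1 _
      have he : Real.exp (-ε * x) ≤ 1 := by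
        rw [← Real.exp_zero]
        exact Real.exp_le_exp.mpr (by nlinarith [hx.1])
      nlinarith
    have h2 : ∫ s in (0:ℝ)..r, s ^ (-γ) = (r ^ (-γ + 1) - 0 ^ (-γ + 1)) / (-γ + 1) :=
      integral_rpow (Or.inl (by linarith))
    rw [Real.zero_rpow (by linarith : -γ + 1 ≠ 0)] at h2
    have h3 : r ^ (-γ + 1) ≤ 1 := Real.rpow_le_one hr0 hr1 (by linarith)
    have h4 : (r ^ (-γ + 1) - 0) / (-γ + 1) ≤ 1 / (1 - γ) := by
      rw [sub_zero, show -γ + 1 = 1 - γ by ring]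
      gcongr
      exact Real.rpow_le_one hr0 hr1 (by linarith)
    linarith [h1, h2 ▸ h1]
  rcases le_or_gt t 1 with h | h
  · linarith [key t ht h]
  · have hsplit := integral_add_adjacent_intervals (hint 0 1) (hint 1 t)
    rw [← hsplit]
    have hb1 := key 1 zero_le_one le_rfl
    have hb2 : ∫ s in (1:ℝ)..t, Real.exp (-ε * s) * s ^ (-γ) ≤
        ∫ s in (1:ℝ)..t, Real.exp (-ε * s) := by
      apply integral_mono_on h.le (hint 1 t)
        ((by fun_prop : Continuous fun s : ℝ => Real.exp (-ε * s)).intervalIntegrable 1 t)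
      intro x hx
      have hx1 : (1:ℝ) ≤ x := hx.1
      have hr : x ^ (-γ) ≤ 1 := Real.rpow_le_one_of_one_le_of_nonpos hx1 (by linarith)
      have he : 0 < Real.exp (-ε * x) := Real.exp_pos _
      nlinarith
    have hb3 : ∫ s in (1:ℝ)..t, Real.exp (-ε * s) ≤ 1 / ε := by
      have hi : ∀ u v : ℝ, IntervalIntegrable (fun s : ℝ => Real.exp (-ε * s)) volume u v :=
        fun u v => (by fun_prop : Continuous fun s : ℝ => Real.exp (-ε * s)).intervalIntegrable u v
      have hsp := integral_add_adjacent_intervals (hi 0 1) (hi 1 t)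
      have hpos : 0 ≤ ∫ s in (0:ℝ)..1, Real.exp (-ε * s) :=
        integral_nonneg zero_le_one (fun u _ => (Real.exp_pos _).le)
      have := aux_exp_int (t := t) hε
      linarith [hsp ▸ this]
    linarith


section Beta
variable {A B t : ℝ}

lemma aux_half1 (hA : A < 1) (hB : B < 1) (ht : 0 < t) :
    IntervalIntegrable (fun s => (t - s) ^ (-A) * s ^ (-B)) volume 0 (t/2) := by
  refine (intervalIntegrable_rpow' (by linarith)).continuousOn_mul ?_
  rw [Set.uIcc_of_le (by linarith : (0:ℝ) ≤ t/2)]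
  apply ContinuousOn.rpow_const
  · exact (continuous_const.sub continuous_id).continuousOn
  · intro x hx
    left
    have := hx.2
    intro hc
    have : x = t := by linarith [sub_eq_zero.mp hc]
    linarith

lemma aux_half2 (hA : A < 1) (hB : B < 1) (ht : 0 < t) :
    IntervalIntegrable (fun s => (t - s) ^ (-A) * s ^ (-B)) volume (t/2) t := by
  have h1 : IntervalIntegrable (fun s : ℝ => (t - s) ^ (-A)) volume (t/2) t := by
    have h := (intervalIntegrable_rpow' (a := t/2) (b := 0) (by linarith : (-1:ℝ) < -A)).comp_sub_left t
    rw [show t - t/2 = t/2 by ring, sub_zero] at h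
    exact h
  refine h1.mul_continuousOn ?_
  rw [Set.uIcc_of_le (by linarith : t/2 ≤ t)]
  apply ContinuousOn.rpow_const continuousOn_id
  intro x hx
  left
  have := hx.1
  intro hc
  simp only [id_eq] at hc
  rw [hc] at this
  linarith

lemma aux_beta_intble (hA : A < 1) (hB : B < 1) (ht : 0 < t) :
    IntervalIntegrable (fun s => (t - s) ^ (-A) * s ^ (-B)) volume 0 t :=
  (aux_half1 hA hB ht).trans (aux_half2 hA hB ht)

lemma aux_beta_int (hA0 : 0 < A) (hA : A < 1) (hB0 : 0 < B) (hB : B < 1) (ht : 0 < t) :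
    ∫ s in (0:ℝ)..t, (t - s) ^ (-A) * s ^ (-B)
      ≤ (2 / (1 - A) + 2 / (1 - B)) * t ^ (1 - A - B) := by
  have h2 : (0:ℝ) < t/2 := by linarith
  have hsplit := integral_add_adjacent_intervals (aux_half1 hA hB ht) (aux_half2 hA hB ht)
  rw [← hsplit]
  -- bound for (t/2)^(e) ≤ 2 * t^e when -1 ≤ e
  have hhalf : ∀ e : ℝ, -1 ≤ e → (t/2) ^ e ≤ 2 * t ^ e := by
    intro e he
    rw [Real.div_rpow ht.le (by norm_num : (0:ℝ) ≤ 2)]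
    have h2e : (1:ℝ)/2 ≤ (2:ℝ) ^ e := by
      have := Real.rpow_le_rpow_of_exponent_le (by norm_num : (1:ℝ) ≤ 2) he
      rwa [Real.rpow_neg_one, show ((2:ℝ))⁻¹ = 1/2 by norm_num] at this
    have h2p : (0:ℝ) < (2:ℝ) ^ e := Real.rpow_pos_of_pos (by norm_num) _
    have htp : (0:ℝ) ≤ t ^ e := Real.rpow_nonneg ht.le _
    rw [div_le_iff₀ h2p]
    nlinarith
  have he1 : (-1:ℝ) ≤ 1 - A - B := by linarith
  -- first half
  have hI1 : ∫ s in (0:ℝ)..(t/2), (t - s) ^ (-A) * s ^ (-B)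
      ≤ 2 / (1 - B) * t ^ (1 - A - B) := by
    have hmono : ∫ s in (0:ℝ)..(t/2), (t - s) ^ (-A) * s ^ (-B)
        ≤ ∫ s in (0:ℝ)..(t/2), (t/2) ^ (-A) * s ^ (-B) := by
      apply integral_mono_on h2.le (aux_half1 hA hB ht)
        ((intervalIntegrable_rpow' (by linarith)).const_mul _)
      intro x hx
      have hb : (t - x) ^ (-A) ≤ (t/2) ^ (-A) :=
        Real.rpow_le_rpow_of_nonpos h2 (by linarith [hx.2]) (by linarith)
      exact mul_le_mul_of_nonneg_right hb (Real.rpow_nonneg hx.1 _)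
    have hcomp : ∫ s in (0:ℝ)..(t/2), (t/2) ^ (-A) * s ^ (-B)
        = (t/2) ^ (-A) * ((t/2) ^ (-B + 1) / (-B + 1)) := by
      rw [intervalIntegral.integral_const_mul, integral_rpow (Or.inl (by linarith))]
      rw [Real.zero_rpow (by linarith : -B + 1 ≠ 0), sub_zero]
    have hc2 : (t/2) ^ (-A) * (t/2) ^ (-B + 1) = (t/2) ^ (1 - A - B) := by
      rw [← Real.rpow_add h2]; ring_nf
    have hb2 : (t/2) ^ (1 - A - B) ≤ 2 * t ^ (1 - A - B) := hhalf _ he1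
    have hpos : (0:ℝ) < -B + 1 := by linarith
    calc ∫ s in (0:ℝ)..(t/2), (t - s) ^ (-A) * s ^ (-B)
        ≤ (t/2) ^ (-A) * ((t/2) ^ (-B + 1) / (-B + 1)) := hcomp ▸ hmono
      _ = (t/2) ^ (1 - A - B) / (-B + 1) := by rw [← hc2]; ring
      _ ≤ 2 * t ^ (1 - A - B) / (-B + 1) := by gcongr
      _ = 2 / (1 - B) * t ^ (1 - A - B) := by
          rw [show -B + 1 = 1 - B by ring]; ring
  -- second half
  have hI2 : ∫ s in (t/2)..t, (t - s) ^ (-A) * s ^ (-B)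
      ≤ 2 / (1 - A) * t ^ (1 - A - B) := by
    have h1int : IntervalIntegrable (fun s : ℝ => (t - s) ^ (-A)) volume (t/2) t := by
      have h := (intervalIntegrable_rpow' (a := t/2) (b := 0)
        (by linarith : (-1:ℝ) < -A)).comp_sub_left t
      rw [show t - t/2 = t/2 by ring, sub_zero] at h
      exact h
    have hmono : ∫ s in (t/2)..t, (t - s) ^ (-A) * s ^ (-B)
        ≤ ∫ s in (t/2)..t, (t - s) ^ (-A) * (t/2) ^ (-B) := by
      apply integral_mono_on (by linarith) (aux_half2 hA hB ht) (h1int.mul_const _)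
      intro x hx
      have hb : x ^ (-B) ≤ (t/2) ^ (-B) :=
        Real.rpow_le_rpow_of_nonpos h2 hx.1 (by linarith)
      exact mul_le_mul_of_nonneg_left hb (Real.rpow_nonneg (by linarith [hx.2]) _)
    have hsub : ∫ s in (t/2)..t, (t - s) ^ (-A) = ∫ x in (0:ℝ)..(t/2), x ^ (-A) := by
      have h := integral_comp_sub_left (a := t/2) (b := t) (fun x : ℝ => x ^ (-A)) t
      rw [sub_self, show t - t/2 = t/2 by ring] at h
      exact h
    have hcomp : ∫ s in (t/2)..t, (t - s) ^ (-A) * (t/2) ^ (-B)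
        = ((t/2) ^ (-A + 1) / (-A + 1)) * (t/2) ^ (-B) := by
      rw [intervalIntegral.integral_mul_const, hsub, integral_rpow (Or.inl (by linarith))]
      rw [Real.zero_rpow (by linarith : -A + 1 ≠ 0), sub_zero]
    have hc2 : (t/2) ^ (-A + 1) * (t/2) ^ (-B) = (t/2) ^ (1 - A - B) := by
      rw [← Real.rpow_add h2]; ring_nf
    have hb2 : (t/2) ^ (1 - A - B) ≤ 2 * t ^ (1 - A - B) := hhalf _ he1
    have hpos : (0:ℝ) < -A + 1 := by linarith
    calc ∫ s in (t/2)..t, (t - s) ^ (-A) * s ^ (-B)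
        ≤ ((t/2) ^ (-A + 1) / (-A + 1)) * (t/2) ^ (-B) := hcomp ▸ hmono
      _ = (t/2) ^ (1 - A - B) / (-A + 1) := by rw [← hc2]; ring
      _ ≤ 2 * t ^ (1 - A - B) / (-A + 1) := by gcongr
      _ = 2 / (1 - A) * t ^ (1 - A - B) := by
          rw [show -A + 1 = 1 - A by ring]; ring
  linarith [hI1, hI2]

end Beta

set_option maxHeartbeats 2000000 in
/-- Quantitative fixed-point estimate: a function dominated by the convolution
integral with kernel `e^{-μ(t-s)}(1+(t-s)^{-1/2-a})` against
`e^{-2λ's}(1+s^{-3/2+b})` decays like `e^{-λ't}(1+t^{-1+c})` with `c = b - a`. -/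
theorem stmt9 (κ μ lam' a b : ℝ) (hκ : 0 < κ) (hlam : 0 < lam') (hlt : lam' < μ)
    (ha0 : 0 < 1/2 + a) (ha1 : 1/2 + a < 1)
    (hb0 : 0 < 3/2 - b) (hb1 : 3/2 - b < 1)
    (hc0 : 0 < 1 - (b - a)) (hc1 : 1 - (b - a) < 1)
    (f : ℝ → ℝ) (hf0 : ∀ t : ℝ, 0 < t → 0 ≤ f t)
    (hf : ∀ t : ℝ, 0 < t →
      f t ≤ κ * ∫ s in (0:ℝ)..t,
        Real.exp (-μ * (t - s)) * (1 + (t - s) ^ (-(1/2 + a)))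
          * Real.exp (-2 * lam' * s) * (1 + s ^ (-(3/2) + b))) :
    ∃ C > 0, ∀ t : ℝ, 0 < t →
      f t ≤ C * Real.exp (-lam' * t) * (1 + t ^ (-1 + (b - a))) := by
  set A : ℝ := 1/2 + a with hAdef
  set B : ℝ := 3/2 - b with hBdef
  set ε : ℝ := min lam' (μ - lam') with hεdef
  have hε : 0 < ε := lt_min hlam (by linarith)
  have hε1 : ε ≤ lam' := min_le_left _ _
  have hε2 : ε ≤ μ - lam' := min_le_right _ _
  set K1 : ℝ := 1/ε with hK1
  set K2 : ℝ := 1/(1 - B) + 1/ε with hK2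
  set K3 : ℝ := 1/(1 - A) + 1/ε with hK3
  set K4 : ℝ := 2/(1 - A) + 2/(1 - B) with hK4
  have hK1p : 0 < K1 := by positivity
  have hK2p : 0 < K2 := by
    have : 0 < 1/(1-B) := by rw [one_div]; exact inv_pos.mpr (by linarith)
    have : 0 < 1/ε := by positivity
    rw [hK2]; linarith
  have hK3p : 0 < K3 := by
    have : 0 < 1/(1-A) := by rw [one_div]; exact inv_pos.mpr (by linarith)
    have : 0 < 1/ε := by positivity
    rw [hK3]; linarith
  have hK4p : 0 < K4 := by
    have h1 : 0 < 2/(1-A) := div_pos two_pos (by linarith)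
    have h2 : 0 < 2/(1-B) := div_pos two_pos (by linarith)
    rw [hK4]; linarith
  refine ⟨κ * (K1 + K2 + K3 + K4), by positivity, ?_⟩
  intro t ht
  -- notation
  have hbeq : (-(3/2:ℝ) + b) = -B := by rw [hBdef]; ring
  -- the four dominating pieces
  set g1 : ℝ → ℝ := fun s => Real.exp (-lam' * t) * Real.exp (-ε * s) with hg1
  set g2 : ℝ → ℝ := fun s => Real.exp (-lam' * t) * (Real.exp (-ε * s) * s ^ (-B)) with hg2
  set g3 : ℝ → ℝ := fun s =>
    Real.exp (-lam' * t) * (Real.exp (-ε * (t - s)) * (t - s) ^ (-A)) with hg3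
  set g4 : ℝ → ℝ := fun s => Real.exp (-lam' * t) * ((t - s) ^ (-A) * s ^ (-B)) with hg4
  -- integrabilities
  have hX_int : IntervalIntegrable (fun s : ℝ => (t - s) ^ (-A)) volume 0 t := by
    have h := (intervalIntegrable_rpow' (a := 0) (b := t)
      (by linarith : (-1:ℝ) < -A)).comp_sub_left t
    rw [sub_zero, sub_self] at h
    exact h.symm
  have hY_int : IntervalIntegrable (fun s : ℝ => s ^ (-B)) volume 0 t :=
    intervalIntegrable_rpow' (by linarith)
  have hXY_int : IntervalIntegrable (fun s : ℝ => (t - s) ^ (-A) * s ^ (-B)) volume 0 t :=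
    aux_beta_intble (by linarith) (by linarith) ht
  have hL_int : IntervalIntegrable (fun s : ℝ =>
      Real.exp (-μ * (t - s)) * (1 + (t - s) ^ (-A))
        * Real.exp (-2 * lam' * s) * (1 + s ^ (-B))) volume 0 t := by
    have heq : (fun s : ℝ =>
        Real.exp (-μ * (t - s)) * (1 + (t - s) ^ (-A))
          * Real.exp (-2 * lam' * s) * (1 + s ^ (-B)))
        = fun s : ℝ => (Real.exp (-μ * (t - s)) * Real.exp (-2 * lam' * s)) *
            (1 + s ^ (-B) + (t - s) ^ (-A) + (t - s) ^ (-A) * s ^ (-B)) := by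
      funext s; ring
    rw [heq]
    refine IntervalIntegrable.continuousOn_mul ?_ (Continuous.continuousOn (by fun_prop))
    exact ((intervalIntegrable_const.add hY_int).add hX_int).add hXY_int
  have hg1_int : IntervalIntegrable g1 volume 0 t :=
    ((by fun_prop : Continuous fun s : ℝ => Real.exp (-ε * s)).intervalIntegrable 0 t).const_mul _
  have hg2_int : IntervalIntegrable g2 volume 0 t :=
    (hY_int.continuousOn_mul (Continuous.continuousOn (by fun_prop))).const_mul _
  have hg3_int : IntervalIntegrable g3 volume 0 t :=
    (hX_int.continuousOn_mul (Continuous.continuousOn (by fun_prop))).const_mul _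
  have hg4_int : IntervalIntegrable g4 volume 0 t := hXY_int.const_mul _
  -- pointwise bound
  have hptwise : ∀ x ∈ Icc (0:ℝ) t,
      Real.exp (-μ * (t - x)) * (1 + (t - x) ^ (-A))
        * Real.exp (-2 * lam' * x) * (1 + x ^ (-B))
      ≤ g1 x + g2 x + g3 x + g4 x := by
    intro x hx
    have hx0 : 0 ≤ x := hx.1
    have hxt : 0 ≤ t - x := by linarith [hx.2]
    have hXn : 0 ≤ (t - x) ^ (-A) := Real.rpow_nonneg hxt _
    have hYn : 0 ≤ x ^ (-B) := Real.rpow_nonneg hx0 _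
    have hQ1 : Real.exp (-ε * (t - x)) ≤ 1 := by
      rw [← Real.exp_zero]
      exact Real.exp_le_exp.mpr (by nlinarith [mul_nonneg hε.le hxt])
    have hR1 : Real.exp (-ε * x) ≤ 1 := by
      rw [← Real.exp_zero]
      exact Real.exp_le_exp.mpr (by nlinarith [mul_nonneg hε.le hx0])
    have hQ0 : 0 < Real.exp (-ε * (t - x)) := Real.exp_pos _
    have hR0 : 0 < Real.exp (-ε * x) := Real.exp_pos _
    have hP0 : 0 < Real.exp (-lam' * t) := Real.exp_pos _
    have hE : Real.exp (-μ * (t - x)) * Real.exp (-2 * lam' * x)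
        ≤ Real.exp (-lam' * t) * (Real.exp (-ε * (t - x)) * Real.exp (-ε * x)) := by
      rw [← Real.exp_add, ← Real.exp_add, ← Real.exp_add]
      refine Real.exp_le_exp.mpr ?_
      nlinarith [mul_nonneg (sub_nonneg.2 hε1) hx0, mul_nonneg (sub_nonneg.2 hε2) hxt,
        mul_nonneg hlam.le hx0]
    set P := Real.exp (-lam' * t)
    set Q := Real.exp (-ε * (t - x))
    set R := Real.exp (-ε * x)
    set X := (t - x) ^ (-A)
    set Y := x ^ (-B)
    calc Real.exp (-μ * (t - x)) * (1 + X) * Real.exp (-2 * lam' * x) * (1 + Y)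
        = (Real.exp (-μ * (t - x)) * Real.exp (-2 * lam' * x)) * ((1 + X) * (1 + Y)) := by
          ring
      _ ≤ (P * (Q * R)) * ((1 + X) * (1 + Y)) := by
          apply mul_le_mul_of_nonneg_right hE
          exact mul_nonneg (by linarith) (by linarith)
      _ = P * (Q * R) + P * ((Q * R) * Y) + P * ((Q * R) * X) + P * ((Q * R) * (X * Y)) := by
          ring
      _ ≤ P * R + P * (R * Y) + P * (Q * X) + P * (X * Y) := by
          have e1 : Q * R ≤ R := by
            calc Q * R ≤ 1 * R := mul_le_mul_of_nonneg_right hQ1 hR0.le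
              _ = R := one_mul R
          have e2 : (Q * R) * Y ≤ R * Y := mul_le_mul_of_nonneg_right e1 hYn
          have eQR : Q * R ≤ Q := by
            calc Q * R ≤ Q * 1 := mul_le_mul_of_nonneg_left hR1 hQ0.le
              _ = Q := mul_one Q
          have e3 : (Q * R) * X ≤ Q * X := mul_le_mul_of_nonneg_right eQR hXn
          have eQR1 : Q * R ≤ 1 := by
            calc Q * R ≤ 1 * 1 := mul_le_mul hQ1 hR1 hR0.le zero_le_one
              _ = 1 := one_mul 1
          have e4 : (Q * R) * (X * Y) ≤ X * Y := by
            calc (Q * R) * (X * Y) ≤ 1 * (X * Y) :=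
                mul_le_mul_of_nonneg_right eQR1 (mul_nonneg hXn hYn)
              _ = X * Y := one_mul _
          have := hP0.le
          have l1 := mul_le_mul_of_nonneg_left e1 this
          have l2 := mul_le_mul_of_nonneg_left e2 this
          have l3 := mul_le_mul_of_nonneg_left e3 this
          have l4 := mul_le_mul_of_nonneg_left e4 this
          linarith
      _ = g1 x + g2 x + g3 x + g4 x := by rw [hg1, hg2, hg3, hg4]
  -- integral bounds on each piece
  have hPn : 0 ≤ Real.exp (-lam' * t) := (Real.exp_pos _).le
  have hi1 : ∫ s in (0:ℝ)..t, g1 s ≤ Real.exp (-lam' * t) * K1 := by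
    rw [hg1, intervalIntegral.integral_const_mul]
    exact mul_le_mul_of_nonneg_left (aux_exp_int hε) hPn
  have hi2 : ∫ s in (0:ℝ)..t, g2 s ≤ Real.exp (-lam' * t) * K2 := by
    rw [hg2, intervalIntegral.integral_const_mul]
    exact mul_le_mul_of_nonneg_left
      (aux_exp_rpow hε (by linarith) (by linarith) ht.le) hPn
  have hi3 : ∫ s in (0:ℝ)..t, g3 s ≤ Real.exp (-lam' * t) * K3 := by
    rw [hg3, intervalIntegral.integral_const_mul]
    refine mul_le_mul_of_nonneg_left ?_ hPn
    have hsub : (∫ s in (0:ℝ)..t, Real.exp (-ε * (t - s)) * (t - s) ^ (-A))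
        = ∫ u in (0:ℝ)..t, Real.exp (-ε * u) * u ^ (-A) := by
      have h := integral_comp_sub_left (a := (0:ℝ)) (b := t)
        (fun u : ℝ => Real.exp (-ε * u) * u ^ (-A)) t
      rw [sub_self, sub_zero] at h
      exact h
    rw [hsub]
    exact aux_exp_rpow hε (by linarith) (by linarith) ht.le
  have hi4 : ∫ s in (0:ℝ)..t, g4 s
      ≤ Real.exp (-lam' * t) * (K4 * t ^ (-1 + (b - a))) := by
    rw [hg4, intervalIntegral.integral_const_mul]
    refine mul_le_mul_of_nonneg_left ?_ hPn
    have h := aux_beta_int (by linarith) (by linarith) (by linarith) (by linarith) ht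
      (A := A) (B := B)
    rw [show (1 - A - B) = -1 + (b - a) by rw [hAdef, hBdef]; ring] at h
    exact h
  -- combine
  have hIneq : (∫ s in (0:ℝ)..t,
      Real.exp (-μ * (t - s)) * (1 + (t - s) ^ (-A))
        * Real.exp (-2 * lam' * s) * (1 + s ^ (-B)))
      ≤ Real.exp (-lam' * t) * (K1 + K2 + K3 + K4 * t ^ (-1 + (b - a))) := by
    have hmono := integral_mono_on ht.le hL_int
      (((hg1_int.add hg2_int).add hg3_int).add hg4_int) hptwise
    have hadd : ∫ s in (0:ℝ)..t, (g1 s + g2 s + g3 s + g4 s)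
        = (∫ s in (0:ℝ)..t, g1 s) + (∫ s in (0:ℝ)..t, g2 s)
          + (∫ s in (0:ℝ)..t, g3 s) + (∫ s in (0:ℝ)..t, g4 s) := by
      rw [integral_add ((hg1_int.add hg2_int).add hg3_int) hg4_int,
        integral_add (hg1_int.add hg2_int) hg3_int,
        integral_add hg1_int hg2_int]
    rw [hadd] at hmono
    calc (∫ s in (0:ℝ)..t,
        Real.exp (-μ * (t - s)) * (1 + (t - s) ^ (-A))
          * Real.exp (-2 * lam' * s) * (1 + s ^ (-B)))
        ≤ (∫ s in (0:ℝ)..t, g1 s) + (∫ s in (0:ℝ)..t, g2 s)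
          + (∫ s in (0:ℝ)..t, g3 s) + (∫ s in (0:ℝ)..t, g4 s) := hmono
      _ ≤ Real.exp (-lam' * t) * K1 + Real.exp (-lam' * t) * K2
          + Real.exp (-lam' * t) * K3
          + Real.exp (-lam' * t) * (K4 * t ^ (-1 + (b - a))) := by
          linarith
      _ = Real.exp (-lam' * t) * (K1 + K2 + K3 + K4 * t ^ (-1 + (b - a))) := by ring
  have hτ : 0 ≤ t ^ (-1 + (b - a)) := Real.rpow_nonneg ht.le _
  have hfk := hf t ht
  rw [hbeq] at hfk
  have hfk2 : f t ≤ κ * (Real.exp (-lam' * t) * (K1 + K2 + K3 + K4 * t ^ (-1 + (b - a)))) :=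
    hfk.trans (mul_le_mul_of_nonneg_left hIneq hκ.le)
  refine hfk2.trans ?_
  have hPn : 0 ≤ Real.exp (-lam' * t) := (Real.exp_pos _).le
  have hfin : K1 + K2 + K3 + K4 * t ^ (-1 + (b - a))
      ≤ (K1 + K2 + K3 + K4) * (1 + t ^ (-1 + (b - a))) := by
    nlinarith [mul_nonneg (by linarith : (0:ℝ) ≤ K1 + K2 + K3) hτ]
  calc κ * (Real.exp (-lam' * t) * (K1 + K2 + K3 + K4 * t ^ (-1 + (b - a))))
      ≤ κ * (Real.exp (-lam' * t) * ((K1 + K2 + K3 + K4) * (1 + t ^ (-1 + (b - a))))) := by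
        refine mul_le_mul_of_nonneg_left ?_ hκ.le
        exact mul_le_mul_of_nonneg_left hfin hPn
    _ = κ * (K1 + K2 + K3 + K4) * Real.exp (-lam' * t) * (1 + t ^ (-1 + (b - a))) := by ring
end
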